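/- arXiv:2003.06748 — 2 statements merged into one kernel-verified Lean document; each statement's English description precedes it below -/
import Mathlib

section
/- Suppose g: ℝⁿ → ℝ^{md} is continuously differentiable, ∇g is L_g-Lipschitz, and sup_x ‖∇g(x)‖ ≤ M. Then ∇r_η(x) = ∇g(x)ᵀ y*(x), where y*(x) is the maximizer of ⟨g(x), y⟩ - (η/2)‖y‖² over Y, is Lipschitz continuous with constant √m·L_g + M²/η. -/
open scoped RealInnerProductSpace BigOperators

private lemma foc_aux {E : Type*} [NormedAddCommGroup E] [InnerProductSpace ℝ E]
    (η : ℝ) (hη : 0 < η) (g y0 y : E) (S : Set E)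
    (hS : ∀ t : ℝ, 0 ≤ t → t ≤ 1 → y0 + t • (y - y0) ∈ S)
    (hmax : IsMaxOn (fun z => ⟪g, z⟫ - η / 2 * ‖z‖ ^ 2) S y0) :
    ⟪g, y - y0⟫ - η * ⟪y0, y - y0⟫ ≤ 0 := by
  set u := y - y0 with hu
  set c := ⟪g, u⟫ - η * ⟪y0, u⟫ with hc
  set B := η / 2 * ‖u‖ ^ 2 with hB
  have hB0 : 0 ≤ B := by positivity
  have key : ∀ t : ℝ, 0 < t → t ≤ 1 → c ≤ t * B := by
    intro t ht ht1
    have h : ⟪g, y0 + t • u⟫ - η / 2 * ‖y0 + t • u‖ ^ 2 ≤ ⟪g, y0⟫ - η / 2 * ‖y0‖ ^ 2 :=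
      hmax (hS t ht.le ht1)
    have e1 : ⟪g, y0 + t • u⟫ = ⟪g, y0⟫ + t * ⟪g, u⟫ := by
      rw [inner_add_right, real_inner_smul_right]
    have e2 : ‖y0 + t • u‖ ^ 2 = ‖y0‖ ^ 2 + 2 * (t * ⟪y0, u⟫) + t ^ 2 * ‖u‖ ^ 2 := by
      rw [norm_add_sq_real, real_inner_smul_right, norm_smul, Real.norm_eq_abs,
        abs_of_nonneg ht.le, mul_pow]
    rw [e1, e2] at h
    have h' : t * (⟪g, u⟫ - η * ⟪y0, u⟫) ≤ η / 2 * (t ^ 2 * ‖u‖ ^ 2) := by nlinarith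
    have := (mul_le_mul_iff_right₀ ht).mp (by nlinarith : t * c ≤ t * (t * B))
    exact this
  by_contra hcpos
  push_neg at hcpos
  rcases eq_or_lt_of_le hB0 with hBz | hBpos
  · have := key 1 one_pos le_rfl
    rw [one_mul, ← hBz] at this
    linarith
  · have htpos : 0 < min 1 (c / (2 * B)) := by
      apply lt_min one_pos
      positivity
    have := key _ htpos (min_le_left _ _)
    have h2 : min 1 (c / (2 * B)) * B ≤ c / (2 * B) * B :=
      mul_le_mul_of_nonneg_right (min_le_right _ _) hB0
    rw [div_mul_eq_mul_div, mul_comm, mul_div_assoc] at h2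
    have h3 : B / (2 * B) = 1 / 2 := by
      rw [div_eq_div_iff (by positivity) two_ne_zero]; ring
    rw [h3] at h2
    nlinarith

set_option maxHeartbeats 1000000 in
theorem stmt_5 (n m d : ℕ) (η Lg M : ℝ) (hη : 0 < η)
    (g : EuclideanSpace ℝ (Fin n) → PiLp 2 fun _ : Fin m => EuclideanSpace ℝ (Fin d))
    (hg : ContDiff ℝ 1 g)
    (hLip : ∀ x₁ x₂, ‖fderiv ℝ g x₁ - fderiv ℝ g x₂‖ ≤ Lg * ‖x₁ - x₂‖)
    (hM : ∀ x, ‖fderiv ℝ g x‖ ≤ M)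
    (ystar : EuclideanSpace ℝ (Fin n) → PiLp 2 fun _ : Fin m => EuclideanSpace ℝ (Fin d))
    (hystar : ∀ x, (∀ i, ‖ystar x i‖ ≤ 1) ∧
      IsMaxOn (fun y => ⟪g x, y⟫ - η / 2 * ‖y‖ ^ 2) {y | ∀ i, ‖y i‖ ≤ 1} (ystar x)) :
    ∀ x₁ x₂,
      ‖(ContinuousLinearMap.adjoint (fderiv ℝ g x₁)) (ystar x₁) -
        (ContinuousLinearMap.adjoint (fderiv ℝ g x₂)) (ystar x₂)‖ ≤
      (Real.sqrt m * Lg + M ^ 2 / η) * ‖x₁ - x₂‖ := by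
  intro x₁ x₂
  obtain ⟨hb₁, hm₁⟩ := hystar x₁
  obtain ⟨hb₂, hm₂⟩ := hystar x₂
  have hM0 : 0 ≤ M := le_trans (norm_nonneg _) (hM x₁)
  -- membership of segments in the set
  have hS : ∀ (a b : PiLp 2 fun _ : Fin m => EuclideanSpace ℝ (Fin d)),
      (∀ i, ‖a i‖ ≤ 1) → (∀ i, ‖b i‖ ≤ 1) → ∀ t : ℝ, 0 ≤ t → t ≤ 1 →
      (a + t • (b - a)) ∈ {y : PiLp 2 fun _ : Fin m => EuclideanSpace ℝ (Fin d) | ∀ i, ‖y i‖ ≤ 1} := by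
    intro a b ha hb t ht ht1 i
    have hco : (a + t • (b - a)) i = (1 - t) • a i + t • b i := by
      simp only [PiLp.add_apply, PiLp.smul_apply, PiLp.sub_apply]
      module
    rw [hco]
    calc ‖(1 - t) • a i + t • b i‖ ≤ ‖(1 - t) • a i‖ + ‖t • b i‖ := norm_add_le _ _
      _ = (1 - t) * ‖a i‖ + t * ‖b i‖ := by
          rw [norm_smul, norm_smul, Real.norm_eq_abs, Real.norm_eq_abs,
            abs_of_nonneg (by linarith), abs_of_nonneg ht]
      _ ≤ (1 - t) * 1 + t * 1 := by
          apply add_le_add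
          · exact mul_le_mul_of_nonneg_left (ha i) (by linarith)
          · exact mul_le_mul_of_nonneg_left (hb i) ht
      _ = 1 := by ring
  have foc₁ := foc_aux η hη (g x₁) (ystar x₁) (ystar x₂) _
    (fun t ht ht1 => hS _ _ hb₁ hb₂ t ht ht1) hm₁
  have foc₂ := foc_aux η hη (g x₂) (ystar x₂) (ystar x₁) _
    (fun t ht ht1 => hS _ _ hb₂ hb₁ t ht ht1) hm₂
  set u := ystar x₂ - ystar x₁ with hu
  have hneg : ystar x₁ - ystar x₂ = -u := by rw [hu]; abel
  rw [hneg, inner_neg_right, inner_neg_right] at foc₂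
  -- strong monotonicity : η ‖u‖² ≤ ⟪g x₂ - g x₁, u⟫
  have hmono : η * ‖u‖ ^ 2 ≤ ⟪g x₂ - g x₁, u⟫ := by
    have e : ⟪ystar x₂, u⟫ - ⟪ystar x₁, u⟫ = ‖u‖ ^ 2 := by
      rw [← inner_sub_left, ← hu, real_inner_self_eq_norm_sq]
    rw [inner_sub_left]
    nlinarith
  -- g is M-Lipschitz
  have hglip : ‖g x₂ - g x₁‖ ≤ M * ‖x₂ - x₁‖ := by
    have := (convex_univ (𝕜 := ℝ)).norm_image_sub_le_of_norm_fderiv_le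
      (fun x _ => (hg.differentiable one_ne_zero).differentiableAt)
      (fun x _ => hM x) (Set.mem_univ x₁) (Set.mem_univ x₂)
    exact this
  -- ystar is (M/η)-Lipschitz
  have hylip : ‖u‖ ≤ M / η * ‖x₁ - x₂‖ := by
    have h1 : η * ‖u‖ ^ 2 ≤ ‖g x₂ - g x₁‖ * ‖u‖ :=
      le_trans hmono (real_inner_le_norm _ _)
    rcases eq_or_lt_of_le (norm_nonneg u) with hz | hz
    · rw [← hz]; positivity
    · have h2 : η * ‖u‖ ≤ ‖g x₂ - g x₁‖ := by nlinarith
      have h3 : η * ‖u‖ ≤ M * ‖x₁ - x₂‖ := by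
        rw [norm_sub_rev x₁ x₂]; linarith
      rw [div_mul_eq_mul_div, le_div_iff₀ hη]
      nlinarith
  -- norm bound √m
  have hsm : ∀ x, ‖ystar x‖ ≤ Real.sqrt m := by
    intro x
    have h2 : ‖ystar x‖ ^ 2 ≤ (m : ℝ) := by
      rw [PiLp.norm_sq_eq_of_L2]
      calc ∑ i, ‖ystar x i‖ ^ 2 ≤ ∑ _i : Fin m, (1 : ℝ) := by
            apply Finset.sum_le_sum
            intro i _
            have := (hystar x).1 i
            nlinarith [norm_nonneg (ystar x i)]
        _ = m := by simp
    have := Real.sqrt_le_sqrt h2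
    rwa [Real.sqrt_sq (norm_nonneg _)] at this
  set A₁ := fderiv ℝ g x₁ with hA₁
  set A₂ := fderiv ℝ g x₂ with hA₂
  have hdecomp : (ContinuousLinearMap.adjoint A₁) (ystar x₁) -
      (ContinuousLinearMap.adjoint A₂) (ystar x₂)
      = (ContinuousLinearMap.adjoint A₁) (ystar x₁ - ystar x₂)
        + (ContinuousLinearMap.adjoint (A₁ - A₂)) (ystar x₂) := by
    rw [map_sub (ContinuousLinearMap.adjoint (𝕜 := ℝ)), map_sub, ContinuousLinearMap.sub_apply]
    abel
  rw [hdecomp]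
  have hnormadj : ∀ (T : EuclideanSpace ℝ (Fin n) →L[ℝ]
      PiLp 2 fun _ : Fin m => EuclideanSpace ℝ (Fin d)),
      ‖ContinuousLinearMap.adjoint T‖ = ‖T‖ := fun T =>
    LinearIsometryEquiv.norm_map _ T
  have h1 : ‖(ContinuousLinearMap.adjoint A₁) (ystar x₁ - ystar x₂)‖ ≤
      M ^ 2 / η * ‖x₁ - x₂‖ := by
    calc ‖(ContinuousLinearMap.adjoint A₁) (ystar x₁ - ystar x₂)‖
        ≤ ‖ContinuousLinearMap.adjoint A₁‖ * ‖ystar x₁ - ystar x₂‖ :=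
          ContinuousLinearMap.le_opNorm _ _
      _ = ‖A₁‖ * ‖u‖ := by rw [hnormadj, hneg, norm_neg]
      _ ≤ M * (M / η * ‖x₁ - x₂‖) :=
          mul_le_mul (hM x₁) hylip (norm_nonneg _) hM0
      _ = M ^ 2 / η * ‖x₁ - x₂‖ := by ring
  have h2 : ‖(ContinuousLinearMap.adjoint (A₁ - A₂)) (ystar x₂)‖ ≤
      Real.sqrt m * Lg * ‖x₁ - x₂‖ := by
    calc ‖(ContinuousLinearMap.adjoint (A₁ - A₂)) (ystar x₂)‖
        ≤ ‖ContinuousLinearMap.adjoint (A₁ - A₂)‖ * ‖ystar x₂‖ :=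
          ContinuousLinearMap.le_opNorm _ _
      _ = ‖A₁ - A₂‖ * ‖ystar x₂‖ := by rw [hnormadj]
      _ ≤ (Lg * ‖x₁ - x₂‖) * Real.sqrt m :=
          mul_le_mul (hLip x₁ x₂) (hsm x₂) (norm_nonneg _)
            (le_trans (norm_nonneg _) (hLip x₁ x₂))
      _ = Real.sqrt m * Lg * ‖x₁ - x₂‖ := by ring
  calc ‖(ContinuousLinearMap.adjoint A₁) (ystar x₁ - ystar x₂)
        + (ContinuousLinearMap.adjoint (A₁ - A₂)) (ystar x₂)‖
      ≤ ‖(ContinuousLinearMap.adjoint A₁) (ystar x₁ - ystar x₂)‖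
        + ‖(ContinuousLinearMap.adjoint (A₁ - A₂)) (ystar x₂)‖ := norm_add_le _ _
    _ ≤ M ^ 2 / η * ‖x₁ - x₂‖ + Real.sqrt m * Lg * ‖x₁ - x₂‖ := add_le_add h1 h2
    _ = (Real.sqrt m * Lg + M ^ 2 / η) * ‖x₁ - x₂‖ := by ring
end

section
/- Let η = ε > 0 and suppose ‖∇F_η(x̂)‖ ≤ ε, where ∇F_η(x̂) = ∇f(x̂) + Σ_{i∈I₁}(1/η)g_i(x̂)∇g_i(x̂) + Σ_{i∈I₂} (g_i(x̂)/‖g_i(x̂)‖)∇g_i(x̂), I₁ = {i : ‖g_i(x̂)‖ ≤ η}, I₂ = {i : ‖g_i(x̂)‖ > η}. Then setting y_i = max{η, ‖g_i(x̂)‖}, μ_i = 1/(2‖g_i(x̂)‖) if ‖g_i(x̂)‖ > η and μ_i = 1/(2η) otherwise, and λ_i = 0, the point x̂ satisfies the ε-KKT conditions: ‖∇f(x̂) + 2Σᵢ μᵢ g_i(x̂)∇g_i(x̂)‖ ≤ ε; 1 - 2μᵢyᵢ - λᵢ = 0; |μᵢ(‖g_i(x̂)‖² - yᵢ²)| ≤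 ε; λᵢyᵢ = 0; λᵢ, μᵢ ≥ 0; yᵢ ≥ ‖g_i(x̂)‖ for all i. -/
open scoped BigOperators

theorem stmt_18 (n d m : ℕ) (ε : ℝ) (hε : 0 < ε)
    (f : EuclideanSpace ℝ (Fin n) → ℝ)
    (g : Fin m → EuclideanSpace ℝ (Fin n) → EuclideanSpace ℝ (Fin d))
    (hf : ContDiff ℝ 1 f) (hg : ∀ i, ContDiff ℝ 1 (g i))
    (xhat : EuclideanSpace ℝ (Fin n))
    (hgradbound : ‖gradient f xhat + ∑ i,
        (if ‖g i xhat‖ ≤ ε then 1 / ε else 1 / ‖g i xhat‖) •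
          (ContinuousLinearMap.adjoint (fderiv ℝ (g i) xhat)) (g i xhat)‖ ≤ ε) :
    ∃ (y μ lam : Fin m → ℝ),
      (∀ i, y i = max ε ‖g i xhat‖) ∧
      (∀ i, μ i = if ε < ‖g i xhat‖ then 1 / (2 * ‖g i xhat‖) else 1 / (2 * ε)) ∧
      (∀ i, lam i = 0) ∧
      ‖gradient f xhat + ∑ i,
        (2 * μ i) • (ContinuousLinearMap.adjoint (fderiv ℝ (g i) xhat)) (g i xhat)‖ ≤ ε ∧
      (∀ i, 1 - 2 * μ i * y i - lam i = 0) ∧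
      (∀ i, |μ i * (‖g i xhat‖ ^ 2 - y i ^ 2)| ≤ ε) ∧
      (∀ i, lam i * y i = 0) ∧
      (∀ i, 0 ≤ lam i ∧ 0 ≤ μ i) ∧
      (∀ i, ‖g i xhat‖ ≤ y i) := by
  refine ⟨fun i => max ε ‖g i xhat‖,
    fun i => if ε < ‖g i xhat‖ then 1 / (2 * ‖g i xhat‖) else 1 / (2 * ε),
    fun _ => 0, fun _ => rfl, fun _ => rfl, fun _ => rfl, ?_, ?_, ?_, fun _ => by ring,
    fun i => ⟨le_refl 0, ?_⟩, fun i => le_max_right _ _⟩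
  · have : ∀ i : Fin m,
        (2 * (if ε < ‖g i xhat‖ then 1 / (2 * ‖g i xhat‖) else 1 / (2 * ε))) •
          (ContinuousLinearMap.adjoint (fderiv ℝ (g i) xhat)) (g i xhat)
        = (if ‖g i xhat‖ ≤ ε then 1 / ε else 1 / ‖g i xhat‖) •
          (ContinuousLinearMap.adjoint (fderiv ℝ (g i) xhat)) (g i xhat) := by
      intro i
      congr 1
      by_cases h : ε < ‖g i xhat‖
      · have hpos : (0:ℝ) < ‖g i xhat‖ := lt_trans hε h
        rw [if_pos h, if_neg (not_le.mpr h)]; field_simp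
      · rw [if_neg h, if_pos (not_lt.mp h)]; field_simp
    simp only [this]
    exact hgradbound
  · intro i
    dsimp only
    by_cases h : ε < ‖g i xhat‖
    · have hpos : (0:ℝ) < ‖g i xhat‖ := lt_trans hε h
      rw [if_pos h, max_eq_right h.le]
      field_simp; ring
    · rw [if_neg h, max_eq_left (not_lt.mp h)]
      field_simp; ring
  · intro i
    dsimp only
    by_cases h : ε < ‖g i xhat‖
    · rw [if_pos h, max_eq_right h.le]; simpa using hε.le
    · push_neg at h
      rw [if_neg (not_lt.mpr h), max_eq_left h]
      have h2 : (0:ℝ) < 2 * ε := by positivity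
      rw [abs_le]
      constructor
      · rw [neg_le, ← mul_neg, div_mul_eq_mul_div, one_mul, div_le_iff₀ h2]
        nlinarith [sq_nonneg ‖g i xhat‖, sq_nonneg ε]
      · rw [div_mul_eq_mul_div, one_mul, div_le_iff₀ h2]
        nlinarith [norm_nonneg (g i xhat), sq_nonneg ε]
  · dsimp only
    by_cases h : ε < ‖g i xhat‖
    · rw [if_pos h]; positivity
    · rw [if_neg h]; positivity
end
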